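/- The map χ sending the Double Riordan triple (g(z²), f₁(z²)/z, f₂(z²)/z) to the Triple Riordan quadruple (g(z³), z, f₁(z³)/z², f₂(z³)/z²) is a group homomorphism: χ(D₁)·χ(D₂) = χ(D₁*D₂) for all Double Riordan arrays D₁, D₂ of this form. -/

import Mathlib

open PowerSeries

variable {K : Type*} [Field K]

/-- Composition (substitution) of formal power series: `pcomp A f = A ∘ f`,
intended for `f` with zero constant term, where `coeff n (f ^ k) = 0` for `k > n`. -/
noncomputable def pcomp (A f : PowerSeries K) : PowerSeries K :=
  PowerSeries.mk fun n => ∑ k ∈ Finset.range (n + 1), coeff k A * coeff n (f ^ k)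

/-- A formal power series is even if all its odd coefficients vanish. -/
def IsEvenPS (g : PowerSeries K) : Prop := ∀ n : ℕ, Odd n → coeff n g = 0

/-- A formal power series is odd if all its even coefficients vanish. -/
def IsOddPS (f : PowerSeries K) : Prop := ∀ n : ℕ, Even n → coeff n f = 0

lemma coeff_pow_zero (f : PowerSeries K) (hf : constantCoeff f = 0) {n k : ℕ} (h : n < k) :
    coeff n (f ^ k) = 0 := by
  have hX : (X : PowerSeries K) ∣ f := X_dvd_iff.mpr hf
  exact (X_pow_dvd_iff.mp (pow_dvd_pow_of_dvd hX k)) n h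

lemma coeff_pcomp (A f : PowerSeries K) (n : ℕ) :
    coeff n (pcomp A f) = ∑ k ∈ Finset.range (n + 1), coeff k A * coeff n (f ^ k) := by
  simp [pcomp]

lemma coeff_eval₂ (Q : Polynomial K) (f : PowerSeries K) (hf : constantCoeff f = 0) (n : ℕ) :
    coeff n (Polynomial.eval₂ C f Q) =
      ∑ k ∈ Finset.range (n + 1), Q.coeff k * coeff n (f ^ k) := by
  rw [Polynomial.eval₂_eq_sum, Polynomial.sum, map_sum]
  have h1 : ∀ k ∈ Q.support, coeff n (C (Q.coeff k) * f ^ k)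
      = Q.coeff k * coeff n (f ^ k) := by
    intro k _; rw [coeff_C_mul]
  rw [Finset.sum_congr rfl h1]
  set F : ℕ → K := fun k => Q.coeff k * coeff n (f ^ k) with hF
  have h2 : ∑ k ∈ Q.support, F k = ∑ k ∈ Q.support ∪ Finset.range (n+1), F k := by
    apply Finset.sum_subset Finset.subset_union_left
    intro k _ hk
    simp only [Polynomial.mem_support_iff, not_not] at hk
    simp [hF, hk]
  have h3 : ∑ k ∈ Finset.range (n+1), F k = ∑ k ∈ Q.support ∪ Finset.range (n+1), F k := by
    apply Finset.sum_subset Finset.subset_union_right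
    intro k _ hk
    simp only [Finset.mem_range, not_lt] at hk
    simp [hF, coeff_pow_zero f hf hk]
  rw [h2, h3]

lemma coeff_pcomp_eq_eval₂ (A : PowerSeries K) (f : PowerSeries K)
    (hf : constantCoeff f = 0) {n m : ℕ} (hnm : n < m) :
    coeff n (pcomp A f) = coeff n (Polynomial.eval₂ C f (trunc m A)) := by
  rw [coeff_pcomp, coeff_eval₂ _ _ hf]
  apply Finset.sum_congr rfl
  intro k hk
  rw [Finset.mem_range] at hk
  rw [coeff_trunc, if_pos (lt_of_lt_of_le hk hnm)]

lemma coeff_eval₂_congr {Q₁ Q₂ : Polynomial K} (f : PowerSeries K)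
    (hf : constantCoeff f = 0) {n : ℕ}
    (h : ∀ k ≤ n, Q₁.coeff k = Q₂.coeff k) :
    coeff n (Polynomial.eval₂ C f Q₁) = coeff n (Polynomial.eval₂ C f Q₂) := by
  rw [coeff_eval₂ _ _ hf, coeff_eval₂ _ _ hf]
  apply Finset.sum_congr rfl
  intro k hk
  rw [Finset.mem_range, Nat.lt_succ_iff] at hk
  rw [h k hk]

lemma pcomp_mul (A B f : PowerSeries K) (hf : constantCoeff f = 0) :
    pcomp (A * B) f = pcomp A f * pcomp B f := by
  ext n
  rw [coeff_pcomp_eq_eval₂ _ f hf (Nat.lt_succ_self n)]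
  have key : coeff n (Polynomial.eval₂ C f (trunc (n+1) (A*B)))
      = coeff n (Polynomial.eval₂ C f (trunc (n+1) A * trunc (n+1) B)) := by
    apply coeff_eval₂_congr f hf
    intro k hk
    rw [coeff_trunc, if_pos (Nat.lt_succ_of_le hk)]
    rw [coeff_mul, Polynomial.coeff_mul]
    apply Finset.sum_congr rfl
    intro x hx
    rw [Finset.HasAntidiagonal.mem_antidiagonal] at hx
    have hx1 : x.1 < n + 1 := by omega
    have hx2 : x.2 < n + 1 := by omega
    rw [coeff_trunc, if_pos hx1, coeff_trunc, if_pos hx2]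
  rw [key, Polynomial.eval₂_mul, coeff_mul, coeff_mul]
  apply Finset.sum_congr rfl
  intro x hx
  rw [Finset.HasAntidiagonal.mem_antidiagonal] at hx
  rw [← coeff_pcomp_eq_eval₂ _ f hf (show x.1 < n+1 by omega),
      ← coeff_pcomp_eq_eval₂ _ f hf (show x.2 < n+1 by omega)]

lemma pcomp_one (f : PowerSeries K) : pcomp (1 : PowerSeries K) f = 1 := by
  ext n
  rw [coeff_pcomp]
  rcases Nat.eq_zero_or_pos n with rfl | hn
  · simp
  · rw [Finset.sum_eq_single 0]
    · simp
    · intro k _ hk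
      rw [coeff_one, if_neg hk, zero_mul]
    · simp

lemma pcomp_pow (A f : PowerSeries K) (hf : constantCoeff f = 0) (j : ℕ) :
    pcomp (A ^ j) f = (pcomp A f) ^ j := by
  induction j with
  | zero => simpa using pcomp_one f
  | succ j ih => rw [pow_succ, pow_succ, pcomp_mul _ _ _ hf, ih]

lemma pcomp_Xpow (f : PowerSeries K) (hf : constantCoeff f = 0) (j : ℕ) :
    pcomp ((X : PowerSeries K) ^ j) f = f ^ j := by
  ext n
  rw [coeff_pcomp]
  rcases le_or_gt j n with hj | hj
  · rw [Finset.sum_eq_single j]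
    · rw [coeff_X_pow, if_pos rfl, one_mul]
    · intro k _ hk
      rw [coeff_X_pow, if_neg hk, zero_mul]
    · intro hc
      exact absurd (Finset.mem_range.mpr (Nat.lt_succ_of_le hj)) hc
  · rw [coeff_pow_zero f hf hj, Finset.sum_eq_zero]
    intro k hk
    rw [Finset.mem_range] at hk
    rw [coeff_X_pow, if_neg (by omega), zero_mul]

lemma pcomp_X (f : PowerSeries K) (hf : constantCoeff f = 0) :
    pcomp (X : PowerSeries K) f = f := by
  have := pcomp_Xpow f hf 1
  simpa using this

lemma pcomp_comp (A g f : PowerSeries K) (hg : constantCoeff g = 0)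
    (hf : constantCoeff f = 0) :
    pcomp (pcomp A g) f = pcomp A (pcomp g f) := by
  ext n
  rw [coeff_pcomp, coeff_pcomp]
  have key : ∀ j : ℕ, coeff n ((pcomp g f) ^ j)
      = ∑ k ∈ Finset.range (n+1), coeff k (g ^ j) * coeff n (f ^ k) := by
    intro j
    rw [← pcomp_pow g f hf j, coeff_pcomp]
  calc ∑ k ∈ Finset.range (n + 1), coeff k (pcomp A g) * coeff n (f ^ k)
      = ∑ k ∈ Finset.range (n + 1), ∑ j ∈ Finset.range (n+1),
          coeff j A * coeff k (g ^ j) * coeff n (f ^ k) := by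
        apply Finset.sum_congr rfl
        intro k hk
        rw [Finset.mem_range, Nat.lt_succ_iff] at hk
        rw [coeff_pcomp, Finset.sum_mul]
        refine Finset.sum_subset (Finset.range_subset_range.mpr (by omega)) ?_
        intro j _ hj
        rw [Finset.mem_range, Nat.lt_succ_iff, not_le] at hj
        rw [coeff_pow_zero g hg (by omega), mul_zero, zero_mul]
    _ = ∑ j ∈ Finset.range (n+1), coeff j A * coeff n ((pcomp g f) ^ j) := by
        rw [Finset.sum_comm]
        apply Finset.sum_congr rfl
        intro j _
        rw [key j, Finset.mul_sum]
        apply Finset.sum_congr rfl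
        intro k _
        ring

lemma coeff_pcomp_Xpow (A : PowerSeries K) {k : ℕ} (hk : 1 ≤ k) (m : ℕ) :
    coeff (k * m) (pcomp A ((X : PowerSeries K) ^ k)) = coeff m A := by
  rw [coeff_pcomp]
  rw [Finset.sum_eq_single m]
  · rw [← pow_mul, coeff_X_pow, if_pos rfl, mul_one]
  · intro j _ hj
    rw [← pow_mul, coeff_X_pow, if_neg (fun hc =>
      hj (Nat.eq_of_mul_eq_mul_left hk hc).symm), mul_zero]
  · intro hc
    exact absurd (Finset.mem_range.mpr (by nlinarith)) hc

lemma pcomp_Xpow_inj {A B : PowerSeries K} {k : ℕ} (hk : 1 ≤ k)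
    (h : pcomp A ((X : PowerSeries K) ^ k) = pcomp B ((X : PowerSeries K) ^ k)) : A = B := by
  ext m
  rw [← coeff_pcomp_Xpow A hk m, ← coeff_pcomp_Xpow B hk m, h]

lemma X_mul_shift (s : PowerSeries K) (hs : constantCoeff s = 0) :
    (X : PowerSeries K) * PowerSeries.mk (fun n => coeff (n+1) s) = s := by
  ext n
  cases n with
  | zero => simpa using hs.symm
  | succ n => rw [coeff_succ_X_mul, coeff_mk]

/-- The map χ : (g(z²), f₁(z²)/z, f₂(z²)/z) ↦ (g(z³), z, f₁(z³)/z², f₂(z³)/z²)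
from the Double Riordan group to the Triple Riordan group is a homomorphism:
χ(D₁)·χ(D₂) = χ(D₁*D₂) componentwise. Here a᷈ᵢ = fᵢ(z²)/z, Aᵢ = Fᵢ(z²)/z,
bᵢ = fᵢ(z³)/z², Bᵢ = Fᵢ(z³)/z²; the Double Riordan product D₁*D₂ is computed
via the odd square root p of a₁a₂ with quotients qa₁, qa₂, and has underlying
data (g'', f₁'', f₂''); the Triple Riordan product of the images is computed
via the cube root h of z·b₁·b₂ with quotients u = z/h, v₁ = b₁/h, v₂ = b₂/h. -/
theorem stmt16 (g f₁ f₂ G F₁ F₂ a₁ a₂ A₁ A₂ b₁ b₂ B₁ B₂ p qa₁ qa₂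
    h u v₁ v₂ g'' f₁'' f₂'' b₁'' b₂'' : PowerSeries K)
    (hg : constantCoeff g ≠ 0)
    (hf₁0 : constantCoeff f₁ = 0) (hf₁1 : coeff 1 f₁ ≠ 0)
    (hf₂0 : constantCoeff f₂ = 0) (hf₂1 : coeff 1 f₂ ≠ 0)
    (hG : constantCoeff G ≠ 0)
    (hF₁0 : constantCoeff F₁ = 0) (hF₁1 : coeff 1 F₁ ≠ 0)
    (hF₂0 : constantCoeff F₂ = 0) (hF₂1 : coeff 1 F₂ ≠ 0)
    (ha₁ : X * a₁ = pcomp f₁ (X ^ 2)) (ha₂ : X * a₂ = pcomp f₂ (X ^ 2))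
    (hA₁ : X * A₁ = pcomp F₁ (X ^ 2)) (hA₂ : X * A₂ = pcomp F₂ (X ^ 2))
    (hb₁ : X ^ 2 * b₁ = pcomp f₁ (X ^ 3)) (hb₂ : X ^ 2 * b₂ = pcomp f₂ (X ^ 3))
    (hB₁ : X ^ 2 * B₁ = pcomp F₁ (X ^ 3)) (hB₂ : X ^ 2 * B₂ = pcomp F₂ (X ^ 3))
    (hp : IsOddPS p) (hpsq : p ^ 2 = a₁ * a₂)
    (hqa₁ : qa₁ * p = a₁) (hqa₂ : qa₂ * p = a₂)
    (hh0 : constantCoeff h = 0) (hh1 : coeff 1 h ≠ 0)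
    (hcube : h ^ 3 = X * b₁ * b₂)
    (hu : u * h = X) (hv₁ : v₁ * h = b₁) (hv₂ : v₂ * h = b₂)
    (hg'' : pcomp g'' (X ^ 2) = pcomp g (X ^ 2) * pcomp (pcomp G (X ^ 2)) p)
    (hf₁'' : pcomp f₁'' (X ^ 2) = X * (qa₁ * pcomp A₁ p))
    (hf₂'' : pcomp f₂'' (X ^ 2) = X * (qa₂ * pcomp A₂ p))
    (hb₁'' : X ^ 2 * b₁'' = pcomp f₁'' (X ^ 3))
    (hb₂'' : X ^ 2 * b₂'' = pcomp f₂'' (X ^ 3)) :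
    pcomp g (X ^ 3) * pcomp (pcomp G (X ^ 3)) h = pcomp g'' (X ^ 3) ∧
    u * pcomp X h = X ∧
    v₁ * pcomp B₁ h = b₁'' ∧
    v₂ * pcomp B₂ h = b₂'' := by
  have hX2 : constantCoeff ((X : PowerSeries K) ^ 2) = 0 := by simp
  have hX3 : constantCoeff ((X : PowerSeries K) ^ 3) = 0 := by simp
  have hXne : (X : PowerSeries K) ≠ 0 := X_ne_zero
  have hX2ne : ((X : PowerSeries K) ^ 2) ≠ 0 := pow_ne_zero 2 hXne
  have hX3ne : ((X : PowerSeries K) ^ 3) ≠ 0 := pow_ne_zero 3 hXne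
  have hp0 : constantCoeff p = 0 := by
    rw [← coeff_zero_eq_constantCoeff_apply]; exact hp 0 Even.zero
  have hhne : h ≠ 0 := fun hc => hh1 (by rw [hc, map_zero])
  -- the series q with X * q = f₁ * f₂
  set q : PowerSeries K := PowerSeries.mk (fun n => coeff (n+1) (f₁ * f₂)) with hqdef
  have hXq : X * q = f₁ * f₂ := X_mul_shift _ (by rw [map_mul, hf₁0, zero_mul])
  have hq0 : constantCoeff q = 0 := by
    rw [← coeff_zero_eq_constantCoeff_apply, hqdef, coeff_mk]
    have h2 : (X : PowerSeries K) ^ 2 ∣ f₁ * f₂ := by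
      rw [sq]; exact mul_dvd_mul (X_dvd_iff.mpr hf₁0) (X_dvd_iff.mpr hf₂0)
    exact X_pow_dvd_iff.mp h2 1 one_lt_two
  -- σ₂/σ₃ of X
  have hs2X : pcomp X ((X : PowerSeries K) ^ 2) = X ^ 2 := pcomp_X _ hX2
  have hs3X : pcomp X ((X : PowerSeries K) ^ 3) = X ^ 3 := pcomp_X _ hX3
  -- a₁ a₂ = σ₂ q
  have hE2 : a₁ * a₂ = pcomp q (X ^ 2) := by
    apply mul_left_cancel₀ hX2ne
    calc (X:PowerSeries K) ^ 2 * (a₁ * a₂) = (X * a₁) * (X * a₂) := by ring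
      _ = pcomp f₁ (X ^ 2) * pcomp f₂ (X ^ 2) := by rw [ha₁, ha₂]
      _ = pcomp (f₁ * f₂) (X ^ 2) := (pcomp_mul _ _ _ hX2).symm
      _ = pcomp (X * q) (X ^ 2) := by rw [hXq]
      _ = pcomp X (X ^ 2) * pcomp q (X ^ 2) := pcomp_mul _ _ _ hX2
      _ = X ^ 2 * pcomp q (X ^ 2) := by rw [hs2X]
  -- X b₁ b₂ = σ₃ q
  have hE3 : X * (b₁ * b₂) = pcomp q (X ^ 3) := by
    apply mul_left_cancel₀ hX3ne
    calc (X:PowerSeries K) ^ 3 * (X * (b₁ * b₂)) = (X ^ 2 * b₁) * (X ^ 2 * b₂) := by ring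
      _ = pcomp f₁ (X ^ 3) * pcomp f₂ (X ^ 3) := by rw [hb₁, hb₂]
      _ = pcomp (f₁ * f₂) (X ^ 3) := (pcomp_mul _ _ _ hX3).symm
      _ = pcomp (X * q) (X ^ 3) := by rw [hXq]
      _ = pcomp X (X ^ 3) * pcomp q (X ^ 3) := pcomp_mul _ _ _ hX3
      _ = X ^ 3 * pcomp q (X ^ 3) := by rw [hs3X]
  have hpsq' : p ^ 2 = pcomp q (X ^ 2) := by rw [hpsq, hE2]
  have hh3 : h ^ 3 = pcomp q (X ^ 3) := by rw [hcube, mul_assoc, hE3]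
  -- composing an even/триple series with p resp. h
  have hcomp2 : ∀ T : PowerSeries K,
      pcomp (pcomp T (X ^ 2)) p = pcomp (pcomp T q) (X ^ 2) := by
    intro T
    rw [pcomp_comp T _ _ hX2 hp0, pcomp_Xpow p hp0 2, hpsq',
      ← pcomp_comp T q _ hq0 hX2]
  have hcomp3 : ∀ T : PowerSeries K,
      pcomp (pcomp T (X ^ 3)) h = pcomp (pcomp T q) (X ^ 3) := by
    intro T
    rw [pcomp_comp T _ _ hX3 hh0, pcomp_Xpow h hh0 3, hh3,
      ← pcomp_comp T q _ hq0 hX3]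
  -- g'' = g * (G ∘ q)
  have hg''eq : g'' = g * pcomp G q := by
    apply pcomp_Xpow_inj (one_le_two)
    rw [hg'', hcomp2 G, pcomp_mul _ _ _ hX2]
  refine ⟨?_, ?_, ?_, ?_⟩
  · rw [hcomp3 G, hg''eq, pcomp_mul _ _ _ hX3]
  · rw [pcomp_X h hh0]; exact hu
  · -- third component
    -- p * (A₁ ∘ p) = σ₂ (F₁ ∘ q)
    have hpA : p * pcomp A₁ p = pcomp (pcomp F₁ q) (X ^ 2) := by
      rw [← hcomp2 F₁, ← hA₁, pcomp_mul _ _ _ hp0, pcomp_X p hp0]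
    -- q * f₁'' = f₁ * (F₁ ∘ q)
    have hf : q * f₁'' = f₁ * pcomp F₁ q := by
      apply pcomp_Xpow_inj (one_le_two)
      rw [pcomp_mul _ _ _ hX2, pcomp_mul _ _ _ hX2, ← hpsq', hf₁'']
      calc p ^ 2 * (X * (qa₁ * pcomp A₁ p)) = X * (qa₁ * p) * (p * pcomp A₁ p) := by ring
        _ = X * a₁ * pcomp (pcomp F₁ q) (X ^ 2) := by rw [hqa₁, hpA]
        _ = pcomp f₁ (X ^ 2) * pcomp (pcomp F₁ q) (X ^ 2) := by rw [ha₁]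
    -- b₁ ≠ 0
    have hb₁ne : b₁ ≠ 0 := by
      intro hc
      apply hf₁1
      have := coeff_pcomp_Xpow f₁ (k := 3) (by norm_num) 1
      rw [← hb₁, hc, mul_zero, map_zero] at this
      exact this.symm
    -- X * b₂ * b₁'' = σ₃ (F₁ ∘ q)
    have hXb : X * b₂ * b₁'' = pcomp (pcomp F₁ q) (X ^ 3) := by
      apply mul_left_cancel₀ (mul_ne_zero hX2ne hb₁ne)
      calc (X:PowerSeries K) ^ 2 * b₁ * (X * b₂ * b₁'') 
          = (X * (b₁ * b₂)) * (X ^ 2 * b₁'') := by ring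
        _ = pcomp q (X ^ 3) * pcomp f₁'' (X ^ 3) := by rw [hE3, hb₁'']
        _ = pcomp (q * f₁'') (X ^ 3) := (pcomp_mul _ _ _ hX3).symm
        _ = pcomp (f₁ * pcomp F₁ q) (X ^ 3) := by rw [hf]
        _ = pcomp f₁ (X ^ 3) * pcomp (pcomp F₁ q) (X ^ 3) := pcomp_mul _ _ _ hX3
        _ = X ^ 2 * b₁ * pcomp (pcomp F₁ q) (X ^ 3) := by rw [hb₁]
    -- h² (B₁ ∘ h) = σ₃ (F₁ ∘ q)
    have hhB : h ^ 2 * pcomp B₁ h = pcomp (pcomp F₁ q) (X ^ 3) := by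
      rw [← hcomp3 F₁, ← hB₁, pcomp_mul _ _ _ hh0, pcomp_Xpow h hh0 2]
    apply mul_left_cancel₀ (pow_ne_zero 3 hhne)
    calc h ^ 3 * (v₁ * pcomp B₁ h) = (v₁ * h) * (h ^ 2 * pcomp B₁ h) := by ring
      _ = b₁ * (X * b₂ * b₁'') := by rw [hv₁, hhB, hXb]
      _ = (X * b₁ * b₂) * b₁'' := by ring
      _ = h ^ 3 * b₁'' := by rw [hcube]
  · -- fourth component (symmetric)
    have hpA : p * pcomp A₂ p = pcomp (pcomp F₂ q) (X ^ 2) := by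
      rw [← hcomp2 F₂, ← hA₂, pcomp_mul _ _ _ hp0, pcomp_X p hp0]
    have hf : q * f₂'' = f₂ * pcomp F₂ q := by
      apply pcomp_Xpow_inj (one_le_two)
      rw [pcomp_mul _ _ _ hX2, pcomp_mul _ _ _ hX2, ← hpsq', hf₂'']
      calc p ^ 2 * (X * (qa₂ * pcomp A₂ p)) = X * (qa₂ * p) * (p * pcomp A₂ p) := by ring
        _ = X * a₂ * pcomp (pcomp F₂ q) (X ^ 2) := by rw [hqa₂, hpA]
        _ = pcomp f₂ (X ^ 2) * pcomp (pcomp F₂ q) (X ^ 2) := by rw [ha₂]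
    have hb₂ne : b₂ ≠ 0 := by
      intro hc
      apply hf₂1
      have := coeff_pcomp_Xpow f₂ (k := 3) (by norm_num) 1
      rw [← hb₂, hc, mul_zero, map_zero] at this
      exact this.symm
    have hXb : X * b₁ * b₂'' = pcomp (pcomp F₂ q) (X ^ 3) := by
      apply mul_left_cancel₀ (mul_ne_zero hX2ne hb₂ne)
      calc (X:PowerSeries K) ^ 2 * b₂ * (X * b₁ * b₂'') 
          = (X * (b₁ * b₂)) * (X ^ 2 * b₂'') := by ring
        _ = pcomp q (X ^ 3) * pcomp f₂'' (X ^ 3) := by rw [hE3, hb₂'']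
        _ = pcomp (q * f₂'') (X ^ 3) := (pcomp_mul _ _ _ hX3).symm
        _ = pcomp (f₂ * pcomp F₂ q) (X ^ 3) := by rw [hf]
        _ = pcomp f₂ (X ^ 3) * pcomp (pcomp F₂ q) (X ^ 3) := pcomp_mul _ _ _ hX3
        _ = X ^ 2 * b₂ * pcomp (pcomp F₂ q) (X ^ 3) := by rw [hb₂]
    have hhB : h ^ 2 * pcomp B₂ h = pcomp (pcomp F₂ q) (X ^ 3) := by
      rw [← hcomp3 F₂, ← hB₂, pcomp_mul _ _ _ hh0, pcomp_Xpow h hh0 2]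
    apply mul_left_cancel₀ (pow_ne_zero 3 hhne)
    calc h ^ 3 * (v₂ * pcomp B₂ h) = (v₂ * h) * (h ^ 2 * pcomp B₂ h) := by ring
      _ = b₂ * (X * b₁ * b₂'') := by rw [hv₂, hhB, hXb]
      _ = (X * b₁ * b₂) * b₂'' := by ring
      _ = h ^ 3 * b₂'' := by rw [hcube]
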